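/- arXiv:1901.04083 — 4 statements merged into one kernel-verified Lean document; each statement's English description precedes it below -/
import Mathlib

section
/- For any nonzero complex constant c and any positive real k, the entire function Ψ(z) = z + c e^{ikz} attains every complex value infinitely many times; in particular Ψ is not injective on ℂ. -/
/-!
Substituting `z = w - v / a` turns `z + c e^{a z} = w` into the Lambert-type equation
`v e^v = b` with `b = a c e^{a w} ≠ 0`. Its solutions are found near the points
`L n = log b + 2πin`: for large `n`, the map `v ↦ L n - log v` is a contraction of the disc of
radius `n` about `L n` (there `|v| ≥ n`, so `|1/v| ≤ 1/2` and `|log v| ≤ log |v| + π ≤ n`), and its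
fixed point solves `v e^v = b` with `v + log v = L n`. The values `L n` are pairwise distinct,
so these solutions are too.
-/

open Filter Set Metric
open scoped Real NNReal

theorem Real.eventually_log_mul_add_le {a : ℝ} (ha : 0 < a) (b : ℝ) :
    ∀ᶠ x : ℝ in atTop, Real.log (a * x) + b ≤ x := by
  filter_upwards [Real.isLittleO_log_id_atTop.bound one_half_pos, eventually_gt_atTop 0,
    eventually_ge_atTop (2 * (Real.log a + b))] with x hlog hx hxab
  rw [Real.log_mul ha.ne' hx.ne']
  rw [Real.norm_eq_abs, id, Real.norm_eq_abs, abs_of_pos hx] at hlog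
  linarith [le_abs_self (Real.log x)]

namespace Complex

theorem norm_log_le_log_norm_add_pi {z : ℂ} (hz : 1 ≤ ‖z‖) :
    ‖log z‖ ≤ Real.log ‖z‖ + π :=
  calc ‖log z‖ ≤ |(log z).re| + |(log z).im| := norm_le_abs_re_add_abs_im _
    _ ≤ Real.log ‖z‖ + π := by
      rw [log_re, log_im, abs_of_nonneg (Real.log_nonneg hz)]
      exact add_le_add_right (abs_arg_le_pi z) _

theorem exists_add_log_eq {L : ℂ} {r : ℝ} (hr : 2 ≤ r) (hL : 2 * r ≤ L.im)
    (hlog : Real.log (‖L‖ + r) + π ≤ r) : ∃ v, v + log v = L := by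
  have him : ∀ v ∈ closedBall L r, r ≤ v.im := fun v hv => by
    have := (abs_le.mp ((abs_im_le_norm (v - L)).trans (mem_closedBall_iff_norm.mp hv))).1
    rw [sub_im] at this
    linarith
  have hmaps : MapsTo (fun v => L - log v) (closedBall L r) (closedBall L r) := fun v hv => by
    have hv1 : r ≤ ‖v‖ := (him v hv).trans (im_le_norm v)
    rw [mem_closedBall_iff_norm, sub_sub_cancel_left, norm_neg]
    calc ‖log v‖ ≤ Real.log ‖v‖ + π := norm_log_le_log_norm_add_pi (by linarith)
      _ ≤ Real.log (‖L‖ + r) + π := by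
        gcongr
        · linarith
        · exact norm_le_of_mem_closedBall hv
      _ ≤ r := hlog
  have hlip : LipschitzOnWith (1 / 2) (fun v => L - log v) (closedBall L r) := by
    refine (convex_closedBall L r).lipschitzOnWith_of_nnnorm_hasDerivWithin_le
      (f' := fun v => -v⁻¹) (fun v hv => ?_) (fun v hv => ?_)
    · have hslit : v ∈ slitPlane := mem_slitPlane_iff.mpr (Or.inr (by linarith [him v hv]))
      exact ((hasDerivAt_log hslit).const_sub L).hasDerivWithinAt
    · rw [← NNReal.coe_le_coe, coe_nnnorm, norm_neg, norm_inv]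
      push_cast
      rw [one_div]
      exact inv_anti₀ two_pos (by linarith [(him v hv).trans (im_le_norm v)])
  have hcontr : ContractingWith (1 / 2) (hmaps.restrict _ _ _) :=
    ⟨by rw [← NNReal.coe_lt_coe]; norm_num, hlip.mapsToRestrict hmaps⟩
  obtain ⟨v, -, hfix, -⟩ := hcontr.exists_fixedPoint' isClosed_closedBall.isComplete hmaps
    (mem_closedBall_self (by linarith)) (edist_ne_top _ _)
  exact ⟨v, by linear_combination -hfix.eq⟩

theorem eventually_exists_mul_exp_eq_and_add_log_eq {b : ℂ} (hb : b ≠ 0) :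
    ∀ᶠ n : ℕ in atTop, ∃ v, v * exp v = b ∧ v + log v = log b + 2 * π * n * I := by
  filter_upwards [tendsto_natCast_atTop_atTop.eventually
      (Real.eventually_log_mul_add_le (a := ‖log b‖ + 8) (by positivity) π),
    eventually_ge_atTop 2] with n hlog hn
  have hn' : (2 : ℝ) ≤ n := by exact_mod_cast hn
  set L := log b + 2 * π * n * I
  have hL_im : 2 * n ≤ L.im := by
    have : L.im = arg b + 2 * π * n := by simp [L, log_im]
    nlinarith [neg_pi_lt_arg b, Real.pi_gt_three]
  have hLnorm : ‖L‖ + n ≤ (‖log b‖ + 8) * n := by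
    have : ‖L‖ ≤ ‖log b‖ + 2 * π * n :=
      (norm_add_le _ _).trans_eq (by simp [abs_of_nonneg Real.pi_pos.le])
    nlinarith [Real.pi_lt_d2, norm_nonneg (log b)]
  obtain ⟨v, hv⟩ := exists_add_log_eq hn' hL_im (le_trans (by gcongr) hlog)
  have hv0 : v ≠ 0 := by
    rintro rfl
    rw [zero_add, log_zero] at hv
    rw [← hv, zero_im] at hL_im
    linarith
  refine ⟨v, ?_, hv⟩
  calc v * exp v = exp (v + log v) := by rw [exp_add, exp_log hv0, mul_comm]
    _ = b := by
      rw [hv, exp_add, exp_log hb, show 2 * π * n * I = n * (2 * π * I) by ring,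
        exp_nat_mul_two_pi_mul_I, mul_one]

theorem infinite_setOf_mul_exp_eq {b : ℂ} (hb : b ≠ 0) : {v : ℂ | v * exp v = b}.Infinite := by
  have hinj : Function.Injective fun n : ℕ => log b + 2 * π * n * I := by
    intro m n h
    simpa [Real.pi_ne_zero, I_ne_zero] using h
  refine Infinite.of_image (fun v => v + log v) (((Nat.frequently_atTop_iff_infinite.mp
    (eventually_exists_mul_exp_eq_and_add_log_eq hb).frequently).image hinj.injOn).mono ?_)
  rintro _ ⟨n, ⟨v, hv, hvL⟩, rfl⟩
  exact ⟨v, hv, hvL⟩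

theorem infinite_setOf_add_mul_exp_eq {a c : ℂ} (ha : a ≠ 0) (hc : c ≠ 0) (w : ℂ) :
    {z : ℂ | z + c * exp (a * z) = w}.Infinite := by
  have hb : a * c * exp (a * w) ≠ 0 := by simp [ha, hc, exp_ne_zero]
  refine ((infinite_setOf_mul_exp_eq hb).image (f := fun v => w - v / a) ?_).mono ?_
  · intro x _ y _ h
    simpa [ha] using h
  · rintro _ ⟨v, hv : v * exp v = _, rfl⟩
    change w - v / a + c * exp (a * (w - v / a)) = w
    have hE : exp (a * w) = v * exp v / (a * c) := by
      rw [hv]; field_simp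
    rw [mul_sub, mul_div_cancel₀ _ ha, exp_sub, hE]
    field_simp [exp_ne_zero v]
    ring

end Complex

/-- For any nonzero `c ∈ ℂ` and `k > 0`, the entire function `Ψ(z) = z + c e^{ikz}`
attains every complex value infinitely many times; in particular `Ψ` is not injective. -/
theorem plane_perturbation_surjective_infinitely_often (c : ℂ) (hc : c ≠ 0)
    (k : ℝ) (hk : 0 < k) :
    (∀ w : ℂ, {z : ℂ | z + c * Complex.exp (Complex.I * k * z) = w}.Infinite) ∧
    ¬ Function.Injective (fun z : ℂ => z + c * Complex.exp (Complex.I * k * z)) := by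
  have hsol : ∀ w : ℂ, {z : ℂ | z + c * Complex.exp (Complex.I * k * z) = w}.Infinite :=
    Complex.infinite_setOf_add_mul_exp_eq
      (mul_ne_zero Complex.I_ne_zero (Complex.ofReal_ne_zero.mpr hk.ne')) hc
  refine ⟨hsol, fun hinj => ?_⟩
  obtain ⟨x, hx, y, hy, hxy⟩ := (hsol 0).nontrivial
  exact hxy (hinj (hx.trans hy.symm))
end

section
/- For any nonzero complex constant c and positive real k, there is no entire function Φ : ℂ → ℂ such that Φ(α + c e^{ikα}) = α for all real α. -/
/-!
If `Φ` were such an inverse, the entire function `Φ ∘ Ψ`, with `Ψ z = z + c e^{ikz}`, would agree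
with the identity on `ℝ` and hence everywhere, so `Ψ` would be injective on `ℂ`. It is not: with
`T = π / k` the shift `z ↦ z + T` flips the sign of `e^{ikz}`, and for `z₀` with
`c e^{ikz₀} = T / 2` it gives `Ψ z₀ = Ψ (z₀ + T)`.
-/

open Filter Topology

namespace Complex

theorem tendsto_ofReal_nhdsNE_zero : Tendsto ((↑) : ℝ → ℂ) (𝓝[≠] 0) (𝓝[≠] 0) := by
  simpa using continuous_ofReal.continuousWithinAt.tendsto_nhdsWithin
    (x := 0) (s := {0}ᶜ) (t := {0}ᶜ) fun x hx => by simpa using hx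

theorem eq_of_forall_ofReal_eq {E : Type*} [NormedAddCommGroup E] [NormedSpace ℂ E]
    [CompleteSpace E] {f g : ℂ → E} (hf : Differentiable ℂ f) (hg : Differentiable ℂ g)
    (hfg : ∀ x : ℝ, f x = g x) : f = g :=
  (hf.differentiableOn.analyticOnNhd isOpen_univ).eq_of_frequently_eq
    (hg.differentiableOn.analyticOnNhd isOpen_univ)
    (tendsto_ofReal_nhdsNE_zero.frequently (Frequently.of_forall hfg))

theorem not_injective_add_mul_exp {a c : ℂ} (ha : a ≠ 0) (hc : c ≠ 0) :
    ¬ Function.Injective fun z => z + c * exp (a * z) := by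
  intro hinj
  set T := Real.pi * I / a
  have hT : T ≠ 0 := div_ne_zero (mul_ne_zero (ofReal_ne_zero.mpr Real.pi_ne_zero) I_ne_zero) ha
  have hexpT : exp (a * T) = -1 := by rw [mul_div_cancel₀ _ ha, exp_pi_mul_I]
  set z₀ := log (T / (2 * c)) / a
  have hexp₀ : c * exp (a * z₀) = T / 2 := by
    rw [mul_div_cancel₀ _ ha, exp_log (div_ne_zero hT (mul_ne_zero two_ne_zero hc))]
    field_simp
  have hshift : z₀ + c * exp (a * z₀) = (z₀ + T) + c * exp (a * (z₀ + T)) := by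
    rw [mul_add, exp_add, hexpT, mul_neg_one, mul_neg, hexp₀]
    ring
  exact hT (by linear_combination -hinj hshift)

end Complex

/-- For any nonzero `c ∈ ℂ` and `k > 0`, there is no entire function `Φ : ℂ → ℂ`
with `Φ(α + c e^{ikα}) = α` for all real `α`. -/
theorem no_entire_inverse_of_plane_perturbation (c : ℂ) (hc : c ≠ 0)
    (k : ℝ) (hk : 0 < k) :
    ¬ ∃ Φ : ℂ → ℂ, Differentiable ℂ Φ ∧
        ∀ α : ℝ, Φ ((α : ℂ) + c * Complex.exp (Complex.I * k * α)) = (α : ℂ) := by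
  rintro ⟨Φ, hΦ, hinv⟩
  set Ψ : ℂ → ℂ := fun z => z + c * Complex.exp (Complex.I * k * z)
  have hΨ : Differentiable ℂ Ψ := by fun_prop
  have hleft : Φ ∘ Ψ = id := Complex.eq_of_forall_ofReal_eq (hΦ.comp hΨ) differentiable_id hinv
  have hIk : Complex.I * k ≠ 0 := mul_ne_zero Complex.I_ne_zero (Complex.ofReal_ne_zero.mpr hk.ne')
  exact Complex.not_injective_add_mul_exp hIk hc (Function.LeftInverse.injective (congrFun hleft))
end

section
/- (Fixed point construction of periodic initial data.) Let c ∈ ℂ with |c| = ε. There exists ε₀ > 0 such that for all 0 ≤ ε ≤ ε₀ there is a bounded continuous 2π-periodic function ξ₀ : ℝ → ℂ such that ω := α + ξ₀ satisfies the functional equation ω̄(α) - α = c e^{-iω(α)} for all α ∈ ℝ, and moreover ‖ω - α - c̄ e^{iα}‖_{L^∞} ≤ C ε² for an absolute constant C. -/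
/-!
Writing `ω = α + z`, the equation `conj ω - α = c e^{-iω}` becomes `z = b e^{i conj z}` with
`b = conj c e^{iα}`, a scalar equation in which `α` enters only through `b`. For `|b| ≤ ε ≤ 1/8`
the map `z ↦ b e^{i conj z}` is a `1/2`-contraction of the disc `|z| ≤ 2ε`, and its fixed point
depends `4`-Lipschitz on `b`. Composing with the continuous `2π`-periodic `α ↦ b` gives `ξ₀`;
the error bound is `|z - b| = |b| |e^{i conj z} - 1| ≤ ε · 2|z|`.
-/

open Complex ComplexConjugate Metric Set Function

namespace PeriodicInitialData

noncomputable def picardMap (b z : ℂ) : ℂ := b * exp (I * conj z)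

lemma norm_exp_I_mul_conj_le_two {z : ℂ} (hz : ‖z‖ ≤ 1 / 4) : ‖exp (I * conj z)‖ ≤ 2 := by
  have hre : (I * conj z).re = z.im := by simp
  calc ‖exp (I * conj z)‖ = Real.exp z.im := by rw [norm_exp, hre]
    _ ≤ Real.exp (1 / 4) := Real.exp_le_exp.mpr ((im_le_norm z).trans hz)
    _ ≤ 1 / (1 - 1 / 4) := Real.exp_bound_div_one_sub_of_interval (by norm_num) (by norm_num)
    _ ≤ 2 := by norm_num

lemma norm_exp_I_mul_conj_sub_one_le {z : ℂ} (hz : ‖z‖ ≤ 1) :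
    ‖exp (I * conj z) - 1‖ ≤ 2 * ‖z‖ := by
  have hIz : ‖I * conj z‖ = ‖z‖ := by rw [norm_mul, norm_I, one_mul, norm_conj]
  exact hIz ▸ norm_exp_sub_one_le (hIz.symm ▸ hz)

lemma norm_picardMap_le {ε : ℝ} {b z : ℂ} (hε : ε ≤ 1 / 8) (hb : ‖b‖ ≤ ε) (hz : ‖z‖ ≤ 2 * ε) :
    ‖picardMap b z‖ ≤ 2 * ε := by
  rw [picardMap, norm_mul]
  calc ‖b‖ * ‖exp (I * conj z)‖ ≤ ε * 2 :=
        mul_le_mul hb (norm_exp_I_mul_conj_le_two (by linarith)) (norm_nonneg _)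
          ((norm_nonneg b).trans hb)
    _ = 2 * ε := mul_comm _ _

lemma conj_picardMap (b z : ℂ) : conj (picardMap b z) = conj b * exp (-I * z) := by
  rw [picardMap, map_mul, ← exp_conj, map_mul, conj_I, conj_conj]

lemma dist_picardMap_right_le {ε : ℝ} {b z w : ℂ} (hε : ε ≤ 1 / 8) (hb : ‖b‖ ≤ ε)
    (hz : ‖z‖ ≤ 2 * ε) (hw : ‖w‖ ≤ 2 * ε) :
    dist (picardMap b z) (picardMap b w) ≤ 1 / 2 * dist z w := by
  have hdiff : exp (I * conj z) - exp (I * conj w) =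
      exp (I * conj w) * (exp (I * conj (z - w)) - 1) := by
    rw [mul_sub, mul_one, ← exp_add, map_sub]; ring_nf
  have hzw : ‖z - w‖ ≤ 1 := by linarith [norm_sub_le z w]
  rw [dist_eq_norm, dist_eq_norm, picardMap, picardMap, ← mul_sub, hdiff, norm_mul, norm_mul]
  calc ‖b‖ * (‖exp (I * conj w)‖ * ‖exp (I * conj (z - w)) - 1‖)
      ≤ ε * (2 * (2 * ‖z - w‖)) := by
        gcongr
        · exact (norm_nonneg b).trans hb
        · exact norm_exp_I_mul_conj_le_two (by linarith)
        · exact norm_exp_I_mul_conj_sub_one_le hzw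
    _ ≤ 1 / 2 * ‖z - w‖ := by nlinarith [norm_nonneg (z - w)]

lemma dist_picardMap_left_le {b b' z : ℂ} (hz : ‖z‖ ≤ 1 / 4) :
    dist (picardMap b z) (picardMap b' z) ≤ 2 * dist b b' := by
  rw [dist_eq_norm, dist_eq_norm, picardMap, picardMap, ← sub_mul, norm_mul, mul_comm]
  gcongr
  exact norm_exp_I_mul_conj_le_two hz

lemma exists_isFixedPt_picardMap {ε : ℝ} {b : ℂ} (hε : ε ≤ 1 / 8) (hb : ‖b‖ ≤ ε) :
    ∃ z, ‖z‖ ≤ 2 * ε ∧ IsFixedPt (picardMap b) z := by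
  have hmaps : MapsTo (picardMap b) (closedBall 0 (2 * ε)) (closedBall 0 (2 * ε)) := by
    intro z hz
    rw [mem_closedBall_zero_iff] at hz ⊢
    exact norm_picardMap_le hε hb hz
  have hcontr : ContractingWith (1 / 2) (hmaps.restrict _ _ _) := by
    refine ⟨by rw [one_div]; exact two_inv_lt_one, LipschitzWith.of_dist_le_mul fun z w => ?_⟩
    have hz := mem_closedBall_zero_iff.mp z.2
    have hw := mem_closedBall_zero_iff.mp w.2
    simpa [Subtype.dist_eq] using dist_picardMap_right_le hε hb hz hw
  have h0 : (0 : ℂ) ∈ closedBall 0 (2 * ε) :=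
    mem_closedBall_self (by linarith [(norm_nonneg b).trans hb])
  obtain ⟨z, hz, hfix, -⟩ :=
    hcontr.exists_fixedPoint' isClosed_closedBall.isComplete hmaps h0 (edist_ne_top _ _)
  exact ⟨z, mem_closedBall_zero_iff.mp hz, hfix⟩

lemma dist_le_of_isFixedPt_picardMap {ε : ℝ} {b b' z z' : ℂ} (hε : ε ≤ 1 / 8) (hb : ‖b‖ ≤ ε)
    (hz : ‖z‖ ≤ 2 * ε) (hz' : ‖z'‖ ≤ 2 * ε) (hfix : IsFixedPt (picardMap b) z)
    (hfix' : IsFixedPt (picardMap b') z') :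
    dist z z' ≤ 4 * dist b b' := by
  have := calc dist z z' = dist (picardMap b z) (picardMap b' z') := by rw [hfix.eq, hfix'.eq]
    _ ≤ dist (picardMap b z) (picardMap b z') + dist (picardMap b z') (picardMap b' z') :=
        dist_triangle _ _ _
    _ ≤ 1 / 2 * dist z z' + 2 * dist b b' := add_le_add
        (dist_picardMap_right_le hε hb hz hz') (dist_picardMap_left_le (by linarith))
  linarith

lemma norm_sub_le_of_isFixedPt_picardMap {ε : ℝ} {b z : ℂ} (hε : ε ≤ 1 / 8) (hb : ‖b‖ ≤ ε)
    (hz : ‖z‖ ≤ 2 * ε) (hfix : IsFixedPt (picardMap b) z) :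
    ‖z - b‖ ≤ 4 * ε ^ 2 := by
  calc ‖z - b‖ = ‖b‖ * ‖exp (I * conj z) - 1‖ := by
        nth_rw 1 [← hfix.eq]
        rw [picardMap, ← norm_mul, mul_sub, mul_one]
    _ ≤ ε * (2 * (2 * ε)) := by
        gcongr
        · exact (norm_nonneg b).trans hb
        · exact (norm_exp_I_mul_conj_sub_one_le (by linarith)).trans (by linarith)
    _ = 4 * ε ^ 2 := by ring

lemma exists_lipschitzWith_isFixedPt_picardMap {ε : ℝ} (hε : ε ≤ 1 / 8) :
    ∃ Z : closedBall (0 : ℂ) ε → ℂ, LipschitzWith 4 Z ∧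
      ∀ b, ‖Z b‖ ≤ 2 * ε ∧ IsFixedPt (picardMap b) (Z b) := by
  choose Z hZ using fun b : closedBall (0 : ℂ) ε =>
    exists_isFixedPt_picardMap hε (mem_closedBall_zero_iff.mp b.2)
  refine ⟨Z, LipschitzWith.of_dist_le_mul fun b b' => ?_, hZ⟩
  exact_mod_cast dist_le_of_isFixedPt_picardMap hε (mem_closedBall_zero_iff.mp b.2)
    (hZ b).1 (hZ b').1 (hZ b).2 (hZ b').2

end PeriodicInitialData

open PeriodicInitialData in
/-- Fixed point construction of periodic initial data: there are constants `C` and `ε₀ > 0`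
such that for every `c ∈ ℂ` with `|c| = ε ≤ ε₀` there is a bounded continuous 2π-periodic
`ξ₀ : ℝ → ℂ` such that `ω(α) := α + ξ₀(α)` solves `conj ω(α) - α = c e^{-iω(α)}` for all
real `α`, with `‖ω - α - conj c · e^{iα}‖_{L^∞} ≤ C ε²`. -/
theorem periodic_initial_data_fixed_point :
    ∃ C : ℝ, 0 < C ∧ ∃ ε₀ : ℝ, 0 < ε₀ ∧
      ∀ (ε : ℝ) (c : ℂ), 0 ≤ ε → ε ≤ ε₀ → ‖c‖ = ε →
        ∃ ξ₀ : ℝ → ℂ, Continuous ξ₀ ∧ (∃ M : ℝ, ∀ α : ℝ, ‖ξ₀ α‖ ≤ M) ∧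
          Function.Periodic ξ₀ (2 * Real.pi) ∧
          (∀ α : ℝ, (starRingEnd ℂ) ((α : ℂ) + ξ₀ α) - (α : ℂ)
              = c * Complex.exp (-Complex.I * ((α : ℂ) + ξ₀ α))) ∧
          (∀ α : ℝ, ‖((α : ℂ) + ξ₀ α) - (α : ℂ) - (starRingEnd ℂ) c * Complex.exp (Complex.I * α)‖
              ≤ C * ε ^ 2) := by
  refine ⟨4, by norm_num, 1 / 8, by norm_num, fun ε c _ hε hc => ?_⟩
  obtain ⟨Z, hZ_lip, hZ⟩ := exists_lipschitzWith_isFixedPt_picardMap hε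
  let b : ℝ → closedBall (0 : ℂ) ε := fun α =>
    ⟨conj c * exp (I * α), by simp [hc]⟩
  have hb_cont : Continuous b := by fun_prop
  have hb_per : Periodic b (2 * Real.pi) := fun α => Subtype.ext <| by
    simp only [b, ofReal_add, ofReal_mul, ofReal_ofNat, mul_add, exp_add]
    rw [show I * (2 * (Real.pi : ℂ)) = 2 * Real.pi * I by ring, exp_two_pi_mul_I, mul_one]
  refine ⟨fun α => Z (b α), hZ_lip.continuous.comp hb_cont, ⟨2 * ε, fun α => (hZ (b α)).1⟩,
    hb_per.comp Z, fun α => ?_, fun α => ?_⟩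
  · have hconj : conj (Z (b α)) = conj (b α : ℂ) * exp (-I * Z (b α)) := by
      rw [← conj_picardMap, (hZ (b α)).2.eq]
    dsimp only
    rw [map_add, conj_ofReal, add_sub_cancel_left, hconj]
    simp only [b, map_mul, conj_conj, ← exp_conj, conj_I, conj_ofReal, mul_assoc, ← exp_add]
    ring_nf
  · dsimp only
    rw [add_sub_cancel_left]
    exact norm_sub_le_of_isFixedPt_picardMap hε (mem_closedBall_zero_iff.mp (b α).2) (hZ (b α)).1
      (hZ (b α)).2
end

section
/- Oscillatory factor estimate (Lemma on regularity-to-decay with nonzero background): let k ≠ 0, s, m ≥ 0, 0 < ε ≤ 1, c ∈ ℂ a constant, and f(α) = c e^{-ikα} + g(εα) e^{-ikα} with g ∈ H^{s+m}(ℝ). Then ‖(I - sgn(k)ℍ) f‖_{H^s(ℝ)} ≤ C(s) (ε^{m-1/2}/|k|^m) ‖g‖_{H^{s+m}(ℝ)}, where ℍ is the flat Hilbert transform. -/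
open MeasureTheory

/-!
Subtracting the background leaves `g(εα) e^{-ikα}`, whose Fourier transform is
`ε⁻¹ ĝ((ξ + k₀)/ε)` with `k₀ = k/2π`. The multiplier `1 + sgn k · sgn ξ` is at most `2` and
vanishes unless `ξ` and `k₀` lie on the same side of `0`; there `|ξ + k₀| = |ξ| + |k₀|`, so
`η = (ξ + k₀)/ε` satisfies `|ξ| ≤ |η|` and `|k₀| ≤ ε|η|`, and the extra weight `(1 + η²)^m`
dominates `(|k₀|/ε)^{2m}`. The substitution `ξ ↦ η` contributes one more factor `ε`.
-/

open FourierTransform Real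

namespace Real

variable {E : Type*} [NormedAddCommGroup E] [NormedSpace ℂ E]

theorem fourier_comp_mul_left (g : ℝ → E) {ε : ℝ} (hε : ε ≠ 0) (ξ : ℝ) :
    𝓕 (fun x => g (ε * x)) ξ = |ε⁻¹| • 𝓕 g (ξ / ε) := by
  simp only [fourier_real_eq_integral_exp_smul]
  have hphase : ∀ x : ℝ, -2 * π * x * ξ = -2 * π * (ε * x) * (ξ / ε) := fun x => by
    field_simp
  simp_rw [hphase]
  exact Measure.integral_comp_mul_left
    (fun y => Complex.exp (↑(-2 * π * y * (ξ / ε)) * Complex.I) • g y) ε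

theorem fourier_exp_smul (g : ℝ → E) (k ξ : ℝ) :
    𝓕 (fun x : ℝ => Complex.exp (-Complex.I * k * x) • g x) ξ = 𝓕 g (ξ + k / (2 * π)) := by
  simp only [fourier_real_eq_integral_exp_smul, smul_smul, ← Complex.exp_add]
  congr 1 with x
  congr 2
  push_cast
  field_simp
  ring

end Real

theorem one_add_sign_mul_sign_eq_zero {a b : ℝ} (h : a * b < 0) :
    1 + Real.sign a * Real.sign b = 0 := by
  rcases mul_neg_iff.mp h with ⟨ha, hb⟩ | ⟨ha, hb⟩
  · rw [Real.sign_of_pos ha, Real.sign_of_neg hb]; norm_num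
  · rw [Real.sign_of_neg ha, Real.sign_of_pos hb]; norm_num

theorem one_add_sign_mul_sign_sq_le (a b : ℝ) : (1 + Real.sign a * Real.sign b) ^ 2 ≤ 4 := by
  rcases Real.sign_apply_eq a with ha | ha | ha <;>
    rcases Real.sign_apply_eq b with hb | hb | hb <;> norm_num [ha, hb]

theorem one_add_sq_rpow_le_mul_rpow {s m a ξ η : ℝ} (hs : 0 ≤ s) (hm : 0 ≤ m)
    (hξη : |ξ| ≤ |η|) (ha : 1 ≤ a * |η|) :
    (1 + ξ ^ 2) ^ s ≤ (a ^ m) ^ 2 * (1 + η ^ 2) ^ (s + m) := by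
  have ha₀ : 0 ≤ a := by
    by_contra! h
    nlinarith [abs_nonneg η]
  have hsq : ξ ^ 2 ≤ η ^ 2 := sq_le_sq.mpr hξη
  have hgain : 1 ≤ (a ^ m) ^ 2 * (1 + η ^ 2) ^ m := by
    rw [Real.rpow_pow_comm ha₀, ← Real.mul_rpow (by positivity) (by positivity)]
    refine Real.one_le_rpow ?_ hm
    nlinarith [sq_abs η, abs_nonneg η]
  calc (1 + ξ ^ 2) ^ s ≤ (1 + η ^ 2) ^ s :=
        Real.rpow_le_rpow (by positivity) (by linarith) hs
    _ ≤ (1 + η ^ 2) ^ s * ((a ^ m) ^ 2 * (1 + η ^ 2) ^ m) :=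
        le_mul_of_one_le_right (by positivity) hgain
    _ = (a ^ m) ^ 2 * (1 + η ^ 2) ^ (s + m) := by
        rw [Real.rpow_add (by positivity)]; ring

theorem one_add_sq_rpow_mul_multiplier_sq_le {s m k k₀ ε : ℝ} (hs : 0 ≤ s) (hm : 0 ≤ m)
    (hk : 0 < k * k₀) (hε : 0 < ε) (hε₁ : ε ≤ 1) (ξ : ℝ) :
    (1 + ξ ^ 2) ^ s * (1 + Real.sign k * Real.sign ξ) ^ 2
      ≤ 4 * ((ε / |k₀|) ^ m) ^ 2 * (1 + ((ξ + k₀) / ε) ^ 2) ^ (s + m) := by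
  by_cases hopp : k * ξ < 0
  · rw [one_add_sign_mul_sign_eq_zero hopp]
    simp only [ne_eq, OfNat.ofNat_ne_zero, not_false_eq_true, zero_pow, mul_zero]
    positivity
  have hk₀ : k₀ ≠ 0 := right_ne_zero_of_mul hk.ne'
  have hsame : 0 ≤ ξ * k₀ := by
    refine nonneg_of_mul_nonneg_right ?_ (sq_pos_of_ne_zero (left_ne_zero_of_mul hk.ne'))
    calc (0 : ℝ) ≤ k * ξ * (k * k₀) := mul_nonneg (not_lt.mp hopp) hk.le
      _ = k ^ 2 * (ξ * k₀) := by ring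
  have hadd : |ξ + k₀| = |ξ| + |k₀| :=
    (abs_add_eq_add_abs_iff ξ k₀).mpr (mul_nonneg_iff.mp hsame)
  have hη : |ξ + k₀| ≤ |(ξ + k₀) / ε| := by
    rw [abs_div, abs_of_pos hε]
    exact le_div_self (abs_nonneg _) hε hε₁
  have hgain : 1 ≤ ε / |k₀| * |(ξ + k₀) / ε| := by
    rw [abs_div, abs_of_pos hε, div_mul_div_comm, mul_comm ε, ← div_mul_div_comm,
      div_self hε.ne', mul_one, one_le_div (abs_pos.mpr hk₀)]
    linarith [abs_nonneg ξ]
  calc (1 + ξ ^ 2) ^ s * (1 + Real.sign k * Real.sign ξ) ^ 2 ≤ (1 + ξ ^ 2) ^ s * 4 := by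
        gcongr
        exact one_add_sign_mul_sign_sq_le k ξ
    _ ≤ ((ε / |k₀|) ^ m) ^ 2 * (1 + ((ξ + k₀) / ε) ^ 2) ^ (s + m) * 4 := by
        gcongr
        exact one_add_sq_rpow_le_mul_rpow hs hm (by linarith [abs_nonneg k₀]) hgain
    _ = _ := by ring

theorem integral_le_mul_integral_of_le_comp_add_div {F w : ℝ → ℝ} {K a ε : ℝ} (hε : 0 < ε)
    (hF : 0 ≤ F) (hw : Integrable w) (hle : ∀ ξ, F ξ ≤ K * w ((ξ + a) / ε)) :
    ∫ ξ, F ξ ≤ K * ε * ∫ η, w η :=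
  calc ∫ ξ, F ξ ≤ ∫ ξ, K * w ((ξ + a) / ε) :=
        integral_mono_of_nonneg (ae_of_all _ hF)
          (((hw.comp_div hε.ne').comp_add_right a).const_mul K) (ae_of_all _ hle)
    _ = K * ε * ∫ η, w η := by
        rw [integral_const_mul, integral_add_right_eq_self (fun t => w (t / ε)) a,
          Measure.integral_comp_div, abs_of_pos hε, smul_eq_mul, mul_assoc]

theorem four_mul_inv_sq_mul_rpow_sq_mul_self {ε k : ℝ} (hε : 0 < ε) (hk : k ≠ 0) (m : ℝ) :
    4 * ε⁻¹ ^ 2 * ((ε / |k / (2 * π)|) ^ m) ^ 2 * ε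
      = (2 * (2 * π) ^ m * (ε ^ (m - 1 / 2 : ℝ) / |k| ^ m)) ^ 2 := by
  have hsqrt : (ε ^ (1 / 2 : ℝ)) ^ 2 = ε := by rw [← Real.sqrt_eq_rpow, Real.sq_sqrt hε.le]
  have hkm : 0 < |k| ^ m := by positivity
  rw [abs_div, abs_of_pos (by positivity : (0 : ℝ) < 2 * π),
    Real.div_rpow hε.le (by positivity), Real.div_rpow (abs_nonneg k) (by positivity),
    Real.rpow_sub hε]
  simp only [mul_pow, div_pow, hsqrt]
  field_simp
  norm_num

/-- `(I - sgn(k)ℍ)` is the Fourier multiplier `1 + sgn k · sgn ξ`, which annihilates the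
background `c e^{-ikα}`; so the left-hand side is `‖(I - sgn(k)ℍ) f‖_{H^s}`. -/
theorem oscillatory_decay_estimate (s m : ℝ) (hs : 0 ≤ s) (hm : 0 ≤ m) :
    ∃ C : ℝ, 0 < C ∧
      ∀ (k ε : ℝ), k ≠ 0 → 0 < ε → ε ≤ 1 →
        ∀ (c : ℂ) (g : ℝ → ℂ),
          Integrable g (volume : Measure ℝ) →
          MemLp g 2 (volume : Measure ℝ) →
          Integrable (fun ξ : ℝ => (1 + ξ ^ 2) ^ (s + m) * ‖FourierTransform.fourier g ξ‖ ^ 2)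
            (volume : Measure ℝ) →
          ∀ f : ℝ → ℂ,
            (∀ α : ℝ, f α = c * Complex.exp (-Complex.I * k * α)
                + g (ε * α) * Complex.exp (-Complex.I * k * α)) →
            Real.sqrt (∫ ξ : ℝ, (1 + ξ ^ 2) ^ s *
                ‖((1 + Real.sign k * Real.sign ξ : ℝ) : ℂ) *
                  FourierTransform.fourier
                    (fun α : ℝ => f α - c * Complex.exp (-Complex.I * k * α)) ξ‖ ^ 2)
              ≤ C * (ε ^ (m - 1 / 2 : ℝ) / |k| ^ m) *
                  Real.sqrt (∫ ξ : ℝ, (1 + ξ ^ 2) ^ (s + m)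
                    * ‖FourierTransform.fourier g ξ‖ ^ 2) := by
  refine ⟨2 * (2 * π) ^ m, by positivity, ?_⟩
  intro k ε hk hε hε₁ c g _ _ hgSob f hf
  set k₀ := k / (2 * π)
  have hFT (ξ : ℝ) : 𝓕 (fun α => f α - c * Complex.exp (-Complex.I * k * α)) ξ
      = ε⁻¹ • 𝓕 g ((ξ + k₀) / ε) := by
    have hmod : (fun α => f α - c * Complex.exp (-Complex.I * k * α))
        = fun α : ℝ => Complex.exp (-Complex.I * k * α) • g (ε * α) := by
      funext α; rw [hf α, smul_eq_mul]; ring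
    rw [hmod, Real.fourier_exp_smul, Real.fourier_comp_mul_left _ hε.ne',
      abs_of_pos (inv_pos.mpr hε)]
  have hkk₀ : 0 < k * k₀ := by
    rw [← mul_div_assoc]; exact div_pos (mul_self_pos.mpr hk) (by positivity)
  have hpointwise (ξ : ℝ) : (1 + ξ ^ 2) ^ s *
      ‖((1 + Real.sign k * Real.sign ξ : ℝ) : ℂ) *
        𝓕 (fun α => f α - c * Complex.exp (-Complex.I * k * α)) ξ‖ ^ 2
      ≤ 4 * ε⁻¹ ^ 2 * ((ε / |k₀|) ^ m) ^ 2
        * ((1 + ((ξ + k₀) / ε) ^ 2) ^ (s + m) * ‖𝓕 g ((ξ + k₀) / ε)‖ ^ 2) := by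
    rw [hFT, norm_mul, norm_smul, Complex.norm_real, Real.norm_eq_abs, Real.norm_eq_abs,
      abs_of_pos (inv_pos.mpr hε), mul_pow, mul_pow, sq_abs]
    have := mul_le_mul_of_nonneg_right
      (one_add_sq_rpow_mul_multiplier_sq_le hs hm hkk₀ hε hε₁ ξ)
      (by positivity : 0 ≤ ε⁻¹ ^ 2 * ‖𝓕 g ((ξ + k₀) / ε)‖ ^ 2)
    linarith
  have hbound := integral_le_mul_integral_of_le_comp_add_div hε (fun ξ => by positivity) hgSob
    hpointwise
  rw [four_mul_inv_sq_mul_rpow_sq_mul_self hε hk] at hbound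
  calc _ ≤ √((2 * (2 * π) ^ m * (ε ^ (m - 1 / 2 : ℝ) / |k| ^ m)) ^ 2
          * ∫ η, (1 + η ^ 2) ^ (s + m) * ‖𝓕 g η‖ ^ 2) := Real.sqrt_le_sqrt hbound
    _ = _ := by rw [Real.sqrt_mul (sq_nonneg _), Real.sqrt_sq (by positivity)]
end
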